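/- arXiv:2604.14458 — 2 statements merged into one kernel-verified Lean document; each statement's English description precedes it below -/
import Mathlib

section
/- If μ is a noncrossing forest on a point configuration P with convex geodesics, then the partition Part(μ) of P whose blocks are the vertex sets of the connected components of μ is a noncrossing partition: the convex hulls of distinct blocks are disjoint. -/
open scoped Classical

/-- The vertex type of a finite point configuration `P ⊆ ℂ`. -/
abbrev Vtx (P : Finset ℂ) := {z : ℂ // z ∈ P}

/-- The block (as a set of points of the plane) of the partition `s` containing `a`. -/
def cblock {P : Finset ℂ} (s : Setoid (Vtx P)) (a : Vtx P) : Set ℂ :=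
  {w : ℂ | ∃ b : Vtx P, s.r a b ∧ w = ↑b}

/-- A partition (setoid) of the points of `P` is noncrossing if the convex hulls of
distinct blocks are pairwise disjoint. -/
def NoncrossingS (P : Finset ℂ) (s : Setoid (Vtx P)) : Prop :=
  ∀ a b : Vtx P, ¬ s.r a b →
    Disjoint (convexHull ℝ (cblock s a)) (convexHull ℝ (cblock s b))

/-- `P` is a hull configuration: no point of `P` lies in the interior of the convex hull
(this includes the degenerate case of a collinear configuration, whose hull has empty
interior). -/
def IsHullConfig (P : Finset ℂ) : Prop :=
  ∀ z ∈ P, z ∉ interior (convexHull ℝ (↑P : Set ℂ))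

/-- The number of blocks of a partition of the points of `P`. -/
noncomputable def numBlocks {P : Finset ℂ} (s : Setoid (Vtx P)) : ℕ :=
  Set.ncard {C : Set (Vtx P) | ∃ a, C = {b | s.r a b}}

/-- The rank of a partition in `NC(P)`: `|P|` minus the number of blocks. -/
noncomputable def rkNC {P : Finset ℂ} (s : Setoid (Vtx P)) : ℕ := P.card - numBlocks s

/-- The partition of the points of `P` into connected components of the graph `H`. -/
def partOf {P : Finset ℂ} (H : SimpleGraph (Vtx P)) : Setoid (Vtx P) :=
  ⟨fun a b => H.Reachable a b,
   ⟨fun a => SimpleGraph.Reachable.refl a, fun h => h.symm, fun h h' => h.trans h'⟩⟩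

/-- `Bool(τ)`: the set of partitions `Part(μ)` of subforests (subgraphs) `μ ⊆ τ`. -/
def boolOf {P : Finset ℂ} (G : SimpleGraph (Vtx P)) : Set (Setoid (Vtx P)) :=
  {s | ∃ H ≤ G, s = partOf H}

/-- The straight-line edges of `G` are pairwise noncrossing: two distinct edges meet
at most in common endpoints. -/
def EdgesNoncrossing (P : Finset ℂ) (G : SimpleGraph (Vtx P)) : Prop :=
  ∀ a b c d : Vtx P, G.Adj a b → G.Adj c d →
    ({a, b} : Set (Vtx P)) ≠ {c, d} →
    ∀ x ∈ segment ℝ (a : ℂ) (b : ℂ) ∩ segment ℝ (c : ℂ) (d : ℂ),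
      (x = ↑a ∨ x = ↑b) ∧ (x = ↑c ∨ x = ↑d)

/-- `G` has convex geodesics: for every connected subgraph (subtree), the convex hull of
its vertices contains no points of `P` other than those vertices. -/
def ConvexGeodesics (P : Finset ℂ) (G : SimpleGraph (Vtx P)) : Prop :=
  ∀ S : Set (Vtx P), (G.induce S).Connected →
    ∀ v : Vtx P, (v : ℂ) ∈ convexHull ℝ (Subtype.val '' S) → v ∈ S

/-- A noncrossing (spanning) tree on `P` with convex geodesics. -/
def IsNCTree (P : Finset ℂ) (G : SimpleGraph (Vtx P)) : Prop :=
  G.IsTree ∧ EdgesNoncrossing P G ∧ ConvexGeodesics P G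

/-!
Let `A ≠ B` be two components. By convex geodesics, no vertex of `B` lies in `hull A`. The planar
fact behind the theorem: a segment `[s, t]` with endpoints outside `hull A` that avoids the
vertices and edges of `A` misses `hull A`. Indeed, if it met `hull A`, the line `st` would meet the
convex set `hull A` only inside `[s, t]`; the vertices of `A` would then lie strictly on both sides
of that line, and a path of `A` joining the two sides would cross it along an edge.
Applied to the edges of `B`, which cannot cross those of `A`, and then to segments joining points of
`hull B \ hull A`, this shows that `hull B \ hull A` is convex. It contains `B`, so it is `hull B`.
-/

open Set AffineMap

theorem Convex.lineMap_mem_segment {E : Type*} [AddCommGroup E] [Module ℝ E] {H : Set E}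
    (hH : Convex ℝ H) {s t x : E} (hs : s ∉ H) (ht : t ∉ H) (hx : x ∈ H)
    (hxst : x ∈ segment ℝ s t) {r : ℝ} (hr : lineMap s t r ∈ H) :
    lineMap s t r ∈ segment ℝ s t := by
  rw [segment_eq_image_lineMap] at hxst ⊢
  obtain ⟨μ, hμ, rfl⟩ := hxst
  have hsub : lineMap s t '' segment ℝ r μ ⊆ H := by
    rw [image_segment]; exact hH.segment_subset hr hx
  refine ⟨r, ⟨?_, ?_⟩, rfl⟩
  · by_contra! h
    refine hs (hsub ⟨0, ?_, lineMap_apply_zero s t⟩)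
    rw [segment_eq_uIcc]; exact ⟨by simp [h.le], by simp [hμ.1]⟩
  · by_contra! h
    refine ht (hsub ⟨1, ?_, lineMap_apply_one s t⟩)
    rw [segment_eq_uIcc]; exact ⟨by simp [hμ.2], by simp [h.le]⟩

/-- For `s ≠ t`, the sign of `lineSide s t y` tells on which side of the line `st` the point `y`
lies. -/
noncomputable def lineSide (s t : ℂ) : ℂ →ᵃ[ℝ] ℝ where
  toFun y := ((y - s) / (t - s)).im
  linear := Complex.imLm ∘ₗ LinearMap.mulRight ℝ (t - s)⁻¹
  map_vadd' p v := by
    simp only [vadd_eq_add, LinearMap.coe_comp, Function.comp_apply, LinearMap.mulRight_apply,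
      Complex.imLm_coe]
    rw [add_sub_assoc, add_div, div_eq_mul_inv v, Complex.add_im]

theorem lineSide_apply (s t y : ℂ) : lineSide s t y = ((y - s) / (t - s)).im := rfl

theorem eq_lineMap_of_lineSide_eq_zero {s t y : ℂ} (hst : s ≠ t) (h : lineSide s t y = 0) :
    y = lineMap s t ((y - s) / (t - s)).re := by
  have : ((y - s) / (t - s) : ℂ) = (((y - s) / (t - s)).re : ℂ) :=
    Complex.ext rfl (by simpa [lineSide_apply] using h)
  rw [lineMap_apply_module', Complex.real_smul, ← this, div_mul_cancel₀ _ (sub_ne_zero.2 hst.symm)]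
  ring

theorem lineSide_lineMap (s t : ℂ) (r : ℝ) : lineSide s t (lineMap s t r) = 0 := by
  have ht : lineSide s t t = 0 := by
    rcases eq_or_ne t s with rfl | h
    · simp [lineSide_apply]
    · simp [lineSide_apply, div_self (sub_ne_zero.2 h)]
  rw [apply_lineMap, ht, show lineSide s t s = 0 by simp [lineSide_apply], lineMap_same_apply]

theorem disjoint_convexHull_reachable_segment {V : Type*} {G : SimpleGraph V} (f : V → ℂ) (a : V)
    {s t : ℂ} (hs : s ∉ convexHull ℝ (f '' {c | G.Reachable a c}))
    (ht : t ∉ convexHull ℝ (f '' {c | G.Reachable a c}))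
    (hvert : ∀ c, G.Reachable a c → f c ∉ segment ℝ s t)
    (hedge : ∀ c d, G.Reachable a c → G.Adj c d →
      Disjoint (segment ℝ (f c) (f d)) (segment ℝ s t)) :
    Disjoint (convexHull ℝ (f '' {c | G.Reachable a c})) (segment ℝ s t) := by
  set H := convexHull ℝ (f '' {c | G.Reachable a c})
  rw [Set.disjoint_left]
  intro x hxH hxst
  have hst : s ≠ t := by
    rintro rfl
    rw [segment_same, mem_singleton_iff] at hxst
    exact hs (hxst ▸ hxH)
  have mem_H : ∀ c, G.Reachable a c → f c ∈ H := fun c hc => subset_convexHull ℝ _ ⟨c, hc, rfl⟩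
  have on_line : ∀ y ∈ H, lineSide s t y = 0 → y ∈ segment ℝ s t := fun y hy h0 => by
    rw [eq_lineMap_of_lineSide_eq_zero hst h0] at hy ⊢
    exact (convex_convexHull ℝ _).lineMap_mem_segment hs ht hxH hxst hy
  have hx0 : lineSide s t x = 0 := by
    rw [segment_eq_image_lineMap] at hxst
    obtain ⟨r, -, rfl⟩ := hxst
    exact lineSide_lineMap s t r
  have exists_side : ∀ σ : Set ℝ, Convex ℝ σ → (0 : ℝ) ∉ σ →
      ∃ c, G.Reachable a c ∧ lineSide s t (f c) ∉ σ := fun σ hσ h0 => by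
    by_contra! h
    refine h0 (hx0 ▸ convexHull_min ?_ (hσ.affine_preimage (lineSide s t)) hxH)
    rintro _ ⟨c, hc, rfl⟩
    exact h c hc
  obtain ⟨c₁, hc₁, hpos⟩ := exists_side (Iio 0) (convex_Iio 0) (by simp)
  replace hpos : 0 ≤ lineSide s t (f c₁) := not_lt.1 hpos
  obtain ⟨c₂, hc₂, hneg⟩ := exists_side (Ioi 0) (convex_Ioi 0) (by simp)
  replace hneg : lineSide s t (f c₂) < 0 := (not_lt.1 hneg).lt_of_ne
    fun h0 => hvert c₂ hc₂ (on_line _ (mem_H c₂ hc₂) h0)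
  obtain ⟨w⟩ := hc₁.symm.trans hc₂
  obtain ⟨d, hd, hd₁, hd₂⟩ :=
    w.exists_boundary_dart {c | 0 ≤ lineSide s t (f c)} hpos (not_le.2 hneg)
  have hreach : G.Reachable a d.fst := by
    classical exact hc₁.trans (w.takeUntil _ (w.dart_fst_mem_support_of_mem_darts hd)).reachable
  have hcross : (0 : ℝ) ∈ segment ℝ (lineSide s t (f d.fst)) (lineSide s t (f d.snd)) := by
    rw [segment_eq_uIcc]
    exact ⟨min_le_of_right_le (not_le.1 hd₂).le, le_max_of_le_left hd₁⟩
  rw [← image_segment] at hcross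
  obtain ⟨y, hy, hy0⟩ := hcross
  have hyH : y ∈ H := (convex_convexHull ℝ _).segment_subset (mem_H _ hreach)
    (mem_H _ (hreach.trans d.adj.reachable)) hy
  exact Set.disjoint_left.1 (hedge _ _ hreach d.adj) hy (on_line y hyH hy0)

theorem SimpleGraph.connected_induce_reachable {V : Type*} (G : SimpleGraph V) (a : V) :
    (G.induce {c | G.Reachable a c}).Connected := by
  have : {c | G.Reachable a c} = (G.connectedComponentMk a).supp := by
    ext c
    simp [SimpleGraph.ConnectedComponent.mem_supp_iff, SimpleGraph.ConnectedComponent.eq,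
      SimpleGraph.reachable_comm]
  rw [this]
  exact (G.connectedComponentMk a).connected_toSimpleGraph

section Components

variable {P : Finset ℂ} {G : SimpleGraph (Vtx P)}

abbrev componentHull (G : SimpleGraph (Vtx P)) (a : Vtx P) : Set ℂ :=
  convexHull ℝ (Subtype.val '' {c | G.Reachable a c})

theorem cblock_partOf (G : SimpleGraph (Vtx P)) (a : Vtx P) :
    cblock (partOf G) a = Subtype.val '' {c | G.Reachable a c} := by
  ext w
  constructor <;> rintro ⟨b, hb, rfl⟩ <;> exact ⟨b, hb, rfl⟩

theorem ConvexGeodesics.reachable_of_mem_componentHull (hcg : ConvexGeodesics P G) {a v : Vtx P}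
    (hv : (v : ℂ) ∈ componentHull G a) : G.Reachable a v :=
  hcg _ (G.connected_induce_reachable a) v hv

theorem segment_subset_componentHull {a p q : Vtx P} (hp : G.Reachable a p)
    (hq : G.Reachable a q) : segment ℝ (p : ℂ) q ⊆ componentHull G a :=
  segment_subset_convexHull ⟨p, hp, rfl⟩ ⟨q, hq, rfl⟩

theorem EdgesNoncrossing.disjoint_segment (hnc : EdgesNoncrossing P G) {c d b b' : Vtx P}
    (hcb : ¬ G.Reachable c b) (hcd : G.Adj c d) (hbb' : G.Adj b b') :
    Disjoint (segment ℝ (c : ℂ) d) (segment ℝ (b : ℂ) b') := by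
  have hb : G.Reachable c b' → G.Reachable c b := fun h => h.trans hbb'.reachable.symm
  have hd : G.Reachable d b → G.Reachable c b := hcd.reachable.trans
  have hne : ({c, d} : Set (Vtx P)) ≠ {b, b'} := by
    intro h
    rcases (h ▸ mem_insert c {d} : c ∈ ({b, b'} : Set (Vtx P))) with rfl | rfl
    exacts [hcb .rfl, hcb (hb .rfl)]
  rw [Set.disjoint_left]
  intro x hcdx hbbx
  obtain ⟨hx₁ | hx₁, hx₂ | hx₂⟩ := hnc c d b b' hcd hbb' hne x ⟨hcdx, hbbx⟩ <;>
    have := Subtype.ext (hx₁.symm.trans hx₂) <;> subst this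
  exacts [hcb .rfl, hcb (hb .rfl), hcb (hd .rfl), hcb (hb hcd.reachable)]

theorem disjoint_componentHull_edge (hnc : EdgesNoncrossing P G) (hcg : ConvexGeodesics P G)
    {a b b' : Vtx P} (hab : ¬ G.Reachable a b) (hbb' : G.Adj b b') :
    Disjoint (componentHull G a) (segment ℝ (b : ℂ) b') := by
  exact disjoint_convexHull_reachable_segment _ a
    (fun h => hab (hcg.reachable_of_mem_componentHull h))
    (fun h => hab ((hcg.reachable_of_mem_componentHull h).trans hbb'.reachable.symm))
    (fun c hc h => hab (hc.trans (hcg.reachable_of_mem_componentHull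
      (segment_subset_componentHull .rfl hbb'.reachable h)).symm))
    (fun c d hc hcd => hnc.disjoint_segment (fun h => hab (hc.trans h)) hcd hbb')

theorem disjoint_componentHull_segment (hnc : EdgesNoncrossing P G) (hcg : ConvexGeodesics P G)
    {a b : Vtx P} (hab : ¬ G.Reachable a b) {s t : ℂ}
    (hs : s ∈ componentHull G b) (ht : t ∈ componentHull G b)
    (hsa : s ∉ componentHull G a) (hta : t ∉ componentHull G a) :
    Disjoint (componentHull G a) (segment ℝ s t) := by
  have hst : segment ℝ s t ⊆ componentHull G b := (convex_convexHull ℝ _).segment_subset hs ht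
  exact disjoint_convexHull_reachable_segment _ a hsa hta
    (fun c hc h => hab (hc.trans (hcg.reachable_of_mem_componentHull (hst h)).symm))
    fun c d hc hcd => (disjoint_componentHull_edge hnc hcg (a := b)
      (fun h => hab (hc.trans h.symm)) hcd).symm.mono_right hst

theorem disjoint_componentHull (hnc : EdgesNoncrossing P G) (hcg : ConvexGeodesics P G)
    {a b : Vtx P} (hab : ¬ G.Reachable a b) :
    Disjoint (componentHull G a) (componentHull G b) := by
  have hconv : Convex ℝ (componentHull G b \ componentHull G a) :=
    convex_iff_segment_subset.2 fun s ⟨hs, hsa⟩ t ⟨ht, hta⟩ y hy =>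
      ⟨(convex_convexHull ℝ _).segment_subset hs ht hy,
        Set.disjoint_right.1 (disjoint_componentHull_segment hnc hcg hab hs ht hsa hta) hy⟩
  have hsub : componentHull G b ⊆ componentHull G b \ componentHull G a := by
    refine convexHull_min ?_ hconv
    rintro _ ⟨c, hc, rfl⟩
    exact ⟨subset_convexHull ℝ _ ⟨c, hc, rfl⟩,
      fun h => hab ((hcg.reachable_of_mem_componentHull h).trans hc.symm)⟩
  exact Set.disjoint_right.2 fun x hx => (hsub hx).2

end Components

theorem stmt4_general (P : Finset ℂ) (G : SimpleGraph (Vtx P))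
    (hnc : EdgesNoncrossing P G)
    (hcg : ConvexGeodesics P G) :
    NoncrossingS P (partOf G) := by
  intro a b hab
  rw [cblock_partOf, cblock_partOf]
  exact disjoint_componentHull hnc hcg hab

/-- If `μ` is a noncrossing forest on `P` with convex geodesics, then the partition
`Part(μ)` of `P` into connected components of `μ` is a noncrossing partition: the
convex hulls of distinct blocks are disjoint. -/
theorem stmt4 (P : Finset ℂ) (G : SimpleGraph (Vtx P))
    (hforest : G.IsAcyclic)
    (hnc : EdgesNoncrossing P G)
    (hcg : ConvexGeodesics P G) :
    NoncrossingS P (partOf G) :=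
  stmt4_general P G hnc hcg
end

section
/- Let B be a subposet of NC(P) isomorphic to Bool(n−1), where P is an n-point hull configuration. Then the edges corresponding to the n−1 atoms of B form a noncrossing spanning tree τ on P with convex geodesics, and B = Bool(τ). -/
open scoped Classical

/-!
The number of blocks strictly decreases along a strict chain of partitions of an `n`-set and lies
between `1` and `n`, while a maximal chain of `Bool(n - 1)` has `n` elements. So the embedding
sends `S` to a partition with `n - |S|` blocks: atoms go to partitions with a single two-element
block (edges), `f (S ∪ {i}) = f S ⊔ f {i}`, and `f S` is the partition into connected components
of the edges indexed by `S`. The `n - 1` edges form a connected graph, hence a spanning tree.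
Noncrossingness of the partitions of its subforests gives that edges meet only at common endpoints
(a shared endpoint is handled by the one-edge subforests, which keep the other points off each
edge) and that subtrees have convex geodesics.
-/

open SimpleGraph Finset

namespace Setoid

variable {α : Type*} {s t : Setoid α}

theorem card_quotient_bot : Nat.card (Quotient (⊥ : Setoid α)) = Nat.card α :=
  Nat.card_congr quotientBotEquiv

variable [Finite α]

theorem eq_of_le_of_card_quotient_le (h : s ≤ t)
    (hc : Nat.card (Quotient s) ≤ Nat.card (Quotient t)) : s = t := by
  have hsurj : Function.Surjective (map_of_le h) := Quotient.ind fun a => ⟨Quotient.mk s a, rfl⟩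
  have hinj := ((Nat.bijective_iff_surjective_and_card _).2
    ⟨hsurj, le_antisymm hc (Nat.card_le_card_of_surjective _ hsurj)⟩).1
  exact le_antisymm h fun x y hxy => Quotient.exact (hinj (Quotient.sound hxy))

theorem card_quotient_lt_card_quotient (h : s < t) :
    Nat.card (Quotient t) < Nat.card (Quotient s) :=
  lt_of_not_ge fun hc => h.ne (eq_of_le_of_card_quotient_le h.le hc)

theorem eq_bot_of_card_le_card_quotient (h : Nat.card α ≤ Nat.card (Quotient s)) : s = ⊥ :=
  (eq_of_le_of_card_quotient_le bot_le (by rwa [card_quotient_bot])).symm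

theorem eq_top_of_card_quotient_le_one (h : Nat.card (Quotient s) ≤ 1) : s = ⊤ :=
  Quotient.subsingleton_iff.1 ((Finite.card_le_one_iff_subsingleton (α := Quotient s)).1 h)

end Setoid

section PairSetoid

variable {α : Type*}

def pairSetoid (e : Sym2 α) : Setoid α where
  r x y := x = y ∨ s(x, y) = e
  iseqv :=
    { refl := fun _ => Or.inl rfl
      symm := by
        rintro x y (rfl | h)
        exacts [Or.inl rfl, Or.inr (Sym2.eq_swap.trans h)]
      trans := by
        rintro x y z (rfl | hxy) (rfl | hyz)
        · exact Or.inl rfl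
        · exact Or.inr hyz
        · exact Or.inr hxy
        · rcases Sym2.eq_iff.1 (hxy.trans hyz.symm) with ⟨rfl, rfl⟩ | ⟨rfl, -⟩ <;>
            exact Or.inl rfl }

theorem pairSetoid_le_iff {u v : α} {t : Setoid α} : pairSetoid s(u, v) ≤ t ↔ t u v := by
  refine ⟨fun h => h (Or.inr rfl), fun h x y hxy => ?_⟩
  rcases hxy with rfl | hxy
  · exact t.refl' x
  · rcases Sym2.eq_iff.1 hxy with ⟨rfl, rfl⟩ | ⟨rfl, rfl⟩
    exacts [h, t.symm' h]

theorem Setoid.exists_eq_pairSetoid [Finite α] {s : Setoid α}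
    (h : Nat.card (Quotient s) + 1 = Nat.card α) :
    ∃ e : Sym2 α, ¬ e.IsDiag ∧ s = pairSetoid e := by
  obtain ⟨u, v, huv, hs⟩ : ∃ u v, u ≠ v ∧ s u v := by
    by_contra! hs
    have : s = ⊥ := le_bot_iff.1 fun x y hxy => by_contra fun hne => hs x y hne hxy
    rw [this, card_quotient_bot] at h
    omega
  have hbot : ⊥ < pairSetoid s(u, v) :=
    bot_lt_iff_ne_bot.2 fun h' => huv <| by
      have : (⊥ : Setoid α) u v := h' ▸ Or.inr rfl
      rwa [bot_def] at this
  have := card_quotient_lt_card_quotient hbot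
  rw [card_quotient_bot] at this
  exact ⟨s(u, v), by simpa using huv,
    (eq_of_le_of_card_quotient_le (pairSetoid_le_iff.2 hs) (by omega)).symm⟩

end PairSetoid

theorem StrictAnti.add_card_le {ι : Type*} {φ : Finset ι → ℕ} (hφ : StrictAnti φ)
    {S T : Finset ι} (h : S ⊆ T) : φ T + #T ≤ φ S + #S := by
  obtain ⟨D, hD, rfl⟩ : ∃ D, Disjoint S D ∧ T = S ∪ D :=
    ⟨T \ S, disjoint_sdiff, (union_sdiff_of_subset h).symm⟩
  clear h
  induction D using Finset.induction_on with
  | empty => simp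
  | insert a D ha ih =>
    have haSD : a ∉ S ∪ D := by
      simp only [mem_union, not_or]
      exact ⟨disjoint_right.1 hD (mem_insert_self a D), ha⟩
    have hlt := hφ (ssubset_insert haSD)
    have hle := ih (hD.mono_right (subset_insert a D))
    rw [union_insert, card_insert_of_notMem haSD]
    omega

namespace OrderEmbedding

variable {α ι : Type*} [Finite α] [Fintype ι] (f : Finset ι ↪o Setoid α)

theorem card_quotient_add_card (hf : Nat.card ι + 1 = Nat.card α) (S : Finset ι) :
    Nat.card (Quotient (f S)) + #S = Nat.card α := by
  have hanti : StrictAnti fun S => Nat.card (Quotient (f S)) :=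
    fun _ _ h => Setoid.card_quotient_lt_card_quotient (f.strictMono h)
  have hbot := hanti.add_card_le (empty_subset S)
  have htop := hanti.add_card_le (subset_univ S)
  have hle : Nat.card (Quotient (f ∅)) ≤ Nat.card α :=
    Nat.card_le_card_of_surjective _ Quotient.mk''_surjective
  have : Nonempty α := Nat.card_pos_iff.1 (by omega) |>.1
  have hpos : 0 < Nat.card (Quotient (f univ)) :=
    Nat.card_pos_iff.2 ⟨⟨Quotient.mk _ (Classical.arbitrary α)⟩, inferInstance⟩
  simp only [card_empty, card_univ, ← Nat.card_eq_fintype_card] at hbot htop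
  omega

theorem map_empty (hf : Nat.card ι + 1 = Nat.card α) : f ∅ = ⊥ :=
  Setoid.eq_bot_of_card_le_card_quotient <| by
    have := f.card_quotient_add_card hf ∅
    simp only [card_empty, add_zero] at this
    omega

theorem map_univ (hf : Nat.card ι + 1 = Nat.card α) : f univ = ⊤ :=
  Setoid.eq_top_of_card_quotient_le_one <| by
    have := f.card_quotient_add_card hf univ
    rw [card_univ, ← Nat.card_eq_fintype_card] at this
    omega

theorem map_insert (hf : Nat.card ι + 1 = Nat.card α) {S : Finset ι} {i : ι} (hi : i ∉ S) :
    f (insert i S) = f S ⊔ f {i} := by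
  have hle : f S ⊔ f {i} ≤ f (insert i S) :=
    sup_le (f.monotone (subset_insert i S))
      (f.monotone (singleton_subset_iff.2 (mem_insert_self i S)))
  have hlt : f S < f S ⊔ f {i} :=
    left_lt_sup.2 fun h => hi (singleton_subset_iff.1 (f.le_iff_le.1 h))
  have := Setoid.card_quotient_lt_card_quotient hlt
  have hS := f.card_quotient_add_card hf S
  have hiS := f.card_quotient_add_card hf (insert i S)
  rw [card_insert_of_notMem hi] at hiS
  exact (Setoid.eq_of_le_of_card_quotient_le hle (by omega)).symm

theorem map_eq_sup_map_singleton (hf : Nat.card ι + 1 = Nat.card α) (S : Finset ι) :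
    f S = S.sup fun i => f {i} := by
  induction S using Finset.induction_on with
  | empty => exact f.map_empty hf
  | insert i S hi ih => rw [f.map_insert hf hi, ih, sup_insert, sup_comm]

theorem exists_map_singleton_eq_pairSetoid (hf : Nat.card ι + 1 = Nat.card α) (i : ι) :
    ∃ e : Sym2 α, ¬ e.IsDiag ∧ f {i} = pairSetoid e :=
  Setoid.exists_eq_pairSetoid <| by
    have := f.card_quotient_add_card hf {i}
    rw [card_singleton] at this
    omega

end OrderEmbedding

namespace SimpleGraph

variable {α ι : Type*}

theorem reachableSetoid_le_iff {G : SimpleGraph α} {t : Setoid α} :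
    G.reachableSetoid ≤ t ↔ ∀ a b, G.Adj a b → t a b := by
  refine ⟨fun h a b hab => h hab.reachable, fun h a b hab => ?_⟩
  replace hab := (reachable_iff_reflTransGen a b).1 hab
  induction hab with
  | refl => exact t.refl' a
  | tail _ hbc ih => exact t.trans' ih (h _ _ hbc)

theorem reachableSetoid_fromEdgeSet_le_ker {β : Type*} {E : Set (Sym2 α)} {g : α → β}
    (hg : ∀ x y, s(x, y) ∈ E → g x = g y) :
    (fromEdgeSet E).reachableSetoid ≤ Setoid.ker g :=
  reachableSetoid_le_iff.2 fun a b hab => hg a b ((fromEdgeSet_adj _).1 hab).1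

theorem reachable_fromEdgeSet_of_mem {E : Set (Sym2 α)} {x y : α} (h : s(x, y) ∈ E) :
    (fromEdgeSet E).Reachable x y := by
  by_cases hxy : x = y
  · exact hxy ▸ Reachable.refl x
  · exact Adj.reachable ((fromEdgeSet_adj _).2 ⟨h, hxy⟩)

theorem reachableSetoid_fromEdgeSet_image (e : ι → Sym2 α) (S : Finset ι) :
    (fromEdgeSet (e '' S)).reachableSetoid = S.sup fun i => pairSetoid (e i) := by
  refine le_antisymm (reachableSetoid_le_iff.2 fun a b hab => ?_) (Finset.sup_le fun i hi => ?_)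
  · obtain ⟨⟨i, hi, hei⟩, -⟩ := (fromEdgeSet_adj _).1 hab
    exact le_sup (f := fun i => pairSetoid (e i)) hi (Or.inr hei.symm)
  · rintro x y (rfl | hxy)
    exacts [Reachable.refl x, reachable_fromEdgeSet_of_mem ⟨i, hi, hxy.symm⟩]

theorem exists_eq_fromEdgeSet_image_of_le [Fintype ι] {e : ι → Sym2 α} {H : SimpleGraph α}
    (h : H ≤ fromEdgeSet (Set.range e)) : ∃ S : Finset ι, H = fromEdgeSet (e '' S) := by
  refine ⟨univ.filter fun i => e i ∈ H.edgeSet, ?_⟩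
  ext a b
  simp only [fromEdgeSet_adj, coe_filter, mem_univ, true_and]
  refine ⟨fun hab => ?_, ?_⟩
  · obtain ⟨⟨i, hi⟩, hne⟩ := (fromEdgeSet_adj _).1 (h hab)
    exact ⟨⟨i, show e i ∈ H.edgeSet by rwa [hi], hi⟩, hne⟩
  · rintro ⟨⟨i, hi, hei⟩, -⟩
    exact (mem_edgeSet H).1 (hei ▸ hi)

theorem range_reachableSetoid_fromEdgeSet_image [Fintype ι] (e : ι → Sym2 α) :
    (Set.range fun S : Finset ι => (fromEdgeSet (e '' S)).reachableSetoid) =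
      {s | ∃ H ≤ fromEdgeSet (Set.range e), s = H.reachableSetoid} := by
  ext s
  constructor
  · rintro ⟨S, rfl⟩
    exact ⟨_, fromEdgeSet_mono (Set.image_subset_range e S), rfl⟩
  · rintro ⟨H, hH, rfl⟩
    obtain ⟨S, rfl⟩ := exists_eq_fromEdgeSet_image_of_le hH
    exact ⟨S, rfl⟩

theorem isTree_fromEdgeSet_range [Finite α] [Finite ι] {e : ι → Sym2 α}
    (he : Function.Injective e) (hdiag : ∀ i, ¬ (e i).IsDiag)
    (htop : (fromEdgeSet (Set.range e)).reachableSetoid = ⊤)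
    (hcard : Nat.card ι + 1 = Nat.card α) :
    (fromEdgeSet (Set.range e)).IsTree := by
  have : Nonempty α := Nat.card_pos_iff.1 (by omega) |>.1
  have hdisj : Disjoint (Set.range e) Sym2.diagSet := by
    rw [Set.disjoint_left]
    rintro _ ⟨i, rfl⟩
    exact hdiag i
  rw [isTree_iff_connected_and_card, edgeSet_fromEdgeSet, hdisj.sdiff_eq_left,
    Nat.card_range_of_injective he]
  exact ⟨(connected_iff _).2 ⟨fun a b => Setoid.eq_top_iff.1 htop a b, this⟩, hcard⟩

end SimpleGraph

theorem OrderEmbedding.exists_map_eq_reachableSetoid_fromEdgeSet {α ι : Type*} [Finite α]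
    [Fintype ι] (f : Finset ι ↪o Setoid α) (hf : Nat.card ι + 1 = Nat.card α) :
    ∃ e : ι → Sym2 α, Function.Injective e ∧ (∀ i, ¬ (e i).IsDiag) ∧
      ∀ S, f S = (fromEdgeSet (e '' S)).reachableSetoid := by
  choose e hdiag he using f.exists_map_singleton_eq_pairSetoid hf
  have hfe : ∀ S, f S = (fromEdgeSet (e '' S)).reachableSetoid := fun S => by
    rw [f.map_eq_sup_map_singleton hf, reachableSetoid_fromEdgeSet_image]
    exact Finset.sup_congr rfl fun i _ => he i
  refine ⟨e, fun i j hij => ?_, hdiag, hfe⟩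
  have : f {i} = f {j} := by
    rw [hfe, hfe, coe_singleton, coe_singleton, Set.image_singleton, Set.image_singleton, hij]
  simpa using f.injective this

theorem eq_left_of_mem_segment_of_mem_segment {𝕜 V : Type*} [Field 𝕜] [LinearOrder 𝕜]
    [IsStrictOrderedRing 𝕜] [AddCommGroup V] [Module 𝕜 V] {p q r x : V}
    (hq : q ∉ segment 𝕜 p r) (hr : r ∉ segment 𝕜 p q)
    (hxq : x ∈ segment 𝕜 p q) (hxr : x ∈ segment 𝕜 p r) : x = p := by
  by_contra hxp
  rw [mem_segment_iff_wbtw] at hq hr hxq hxr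
  have hqr : SameRay 𝕜 (q -ᵥ p) (r -ᵥ p) :=
    hxq.sameRay_vsub_left.symm.trans hxr.sameRay_vsub_left fun h =>
      absurd (vsub_eq_zero_iff_eq.1 h) hxp
  rcases wbtw_total_of_sameRay_vsub_left hqr with h | h
  exacts [hq h, hr h]

section Geometry

variable {P : Finset ℂ}

theorem NoncrossingS.disjoint_segment {s : Setoid (Vtx P)} (hs : NoncrossingS P s)
    {a b c d : Vtx P} (hab : s a b) (hcd : s c d) (hac : ¬ s a c) :
    Disjoint (segment ℝ (a : ℂ) b) (segment ℝ (c : ℂ) d) := by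
  have hsub : ∀ {x y : Vtx P}, s x y →
      segment ℝ (x : ℂ) y ⊆ convexHull ℝ (cblock s x) :=
    fun {x y} hxy => by
      rw [← convexHull_pair]
      refine convexHull_mono ?_
      rintro _ (rfl | rfl)
      exacts [⟨x, s.refl' x, rfl⟩, ⟨y, hxy, rfl⟩]
  exact (hs a c hac).mono (hsub hab) (hsub hcd)

variable {G : SimpleGraph (Vtx P)}

theorem disjoint_segment_of_fromEdgeSet_le (hG : ∀ H ≤ G, NoncrossingS P (partOf H))
    {a b c d : Vtx P} (hH : fromEdgeSet {s(a, b), s(c, d)} ≤ G)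
    (hab : a ≠ b) (hac : a ≠ c) (had : a ≠ d) (hbc : b ≠ c) (hbd : b ≠ d) :
    Disjoint (segment ℝ (a : ℂ) b) (segment ℝ (c : ℂ) d) := by
  -- `g` contracts each of the two edges onto one endpoint, so its kernel separates them.
  let g : Vtx P → Vtx P := fun x => if x = b then a else if x = d then c else x
  have hle : partOf (fromEdgeSet {s(a, b), s(c, d)}) ≤ Setoid.ker g := by
    refine reachableSetoid_fromEdgeSet_le_ker fun x y hxy => ?_
    simp only [Set.mem_insert_iff, Set.mem_singleton_iff, Sym2.eq_iff] at hxy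
    rcases hxy with (⟨rfl, rfl⟩ | ⟨rfl, rfl⟩) | (⟨rfl, rfl⟩ | ⟨rfl, rfl⟩) <;>
      simp [g, hab, had, hbc.symm, hbd.symm]
  refine (hG _ hH).disjoint_segment (reachable_fromEdgeSet_of_mem (by simp))
    (reachable_fromEdgeSet_of_mem (by simp)) fun h => hac ?_
  simpa [g, hab, had, hbc.symm, hbd.symm] using hle h

theorem notMem_segment_of_adj (hG : ∀ H ≤ G, NoncrossingS P (partOf H)) {a b w : Vtx P}
    (hab : G.Adj a b) (hwa : w ≠ a) (hwb : w ≠ b) : (w : ℂ) ∉ segment ℝ (a : ℂ) b := by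
  -- `s(w, w)` is a loop, so this is the one-edge graph on `a b`.
  have hH : fromEdgeSet {s(a, b), s(w, w)} ≤ G := by
    simp [Set.insert_subset_iff, hab]
  have := disjoint_segment_of_fromEdgeSet_le hG hH hab.ne hwa.symm hwa.symm hwb.symm hwb.symm
  simpa using this

theorem eq_of_mem_segment_of_adj_of_adj (hG : ∀ H ≤ G, NoncrossingS P (partOf H))
    {p q r : Vtx P} (hpq : G.Adj p q) (hpr : G.Adj p r) (hqr : q ≠ r) {x : ℂ}
    (hxq : x ∈ segment ℝ (p : ℂ) q) (hxr : x ∈ segment ℝ (p : ℂ) r) : x = p :=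
  eq_left_of_mem_segment_of_mem_segment (notMem_segment_of_adj hG hpr hpq.ne' hqr)
    (notMem_segment_of_adj hG hpq hpr.ne' hqr.symm) hxq hxr

theorem edgesNoncrossing_of_noncrossing (hG : ∀ H ≤ G, NoncrossingS P (partOf H)) :
    EdgesNoncrossing P G := by
  intro a b c d hab hcd hne x ⟨hxab, hxcd⟩
  by_cases hac : a = c
  · subst hac
    have hxa := eq_of_mem_segment_of_adj_of_adj hG hab hcd (by rintro rfl; exact hne rfl) hxab hxcd
    exact ⟨.inl hxa, .inl hxa⟩
  by_cases had : a = d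
  · subst had
    rw [segment_symm] at hxcd
    have hxa := eq_of_mem_segment_of_adj_of_adj hG hab hcd.symm
      (by rintro rfl; exact hne (Set.pair_comm _ _)) hxab hxcd
    exact ⟨.inl hxa, .inr hxa⟩
  by_cases hbc : b = c
  · subst hbc
    rw [segment_symm] at hxab
    have hxb := eq_of_mem_segment_of_adj_of_adj hG hab.symm hcd had hxab hxcd
    exact ⟨.inr hxb, .inl hxb⟩
  by_cases hbd : b = d
  · subst hbd
    rw [segment_symm] at hxab hxcd
    have hxb := eq_of_mem_segment_of_adj_of_adj hG hab.symm hcd.symm hac hxab hxcd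
    exact ⟨.inr hxb, .inr hxb⟩
  have hH : fromEdgeSet {s(a, b), s(c, d)} ≤ G := by
    simp [Set.insert_subset_iff, hab, hcd]
  exact absurd hxcd (Set.disjoint_left.1
    (disjoint_segment_of_fromEdgeSet_le hG hH hab.ne hac had hbc hbd) hxab)

theorem convexGeodesics_of_noncrossing (hG : ∀ H ≤ G, NoncrossingS P (partOf H)) :
    ConvexGeodesics P G := by
  intro S hS v hv
  by_contra hvS
  obtain ⟨⟨a, haS⟩⟩ := hS.nonempty
  let H := (G.induce S).map (Function.Embedding.subtype _)
  have hHG : H ≤ G := (map_le_iff_le_comap _ _ _).2 le_rfl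
  have hHS : partOf H ≤ Setoid.ker (· ∈ S) := by
    refine reachableSetoid_le_iff.2 ?_
    rintro _ _ ⟨-, x, y, -, rfl, rfl⟩
    simp [x.2, y.2]
  have hSa : Subtype.val '' S ⊆ cblock (partOf H) a := by
    rintro _ ⟨b, hb, rfl⟩
    exact ⟨b, (hS.preconnected ⟨a, haS⟩ ⟨b, hb⟩).map (Embedding.map _ _).toHom, rfl⟩
  have hav : ¬ (partOf H) a v := fun h => hvS (Setoid.ker_def.1 (hHS h) ▸ haS)
  exact Set.disjoint_left.1 (hG H hHG a v hav) (convexHull_mono hSa hv)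
    (subset_convexHull ℝ _ ⟨v, (partOf H).refl' v, rfl⟩)

end Geometry

theorem stmt17_general (P : Finset ℂ) (hn : 1 ≤ P.card)
    (B : Set (Setoid (Vtx P)))
    (hBnc : ∀ s ∈ B, NoncrossingS P s)
    (hBiso : Nonempty (↥B ≃o Finset (Fin (P.card - 1)))) :
    ∃ G : SimpleGraph (Vtx P), IsNCTree P G ∧ B = boolOf G := by
  obtain ⟨φ⟩ := hBiso
  let f : Finset (Fin (P.card - 1)) ↪o Setoid (Vtx P) :=
    φ.symm.toOrderEmbedding.trans (OrderEmbedding.subtype _)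
  have hcard : Nat.card (Fin (P.card - 1)) + 1 = Nat.card (Vtx P) := by
    simp only [Nat.card_eq_fintype_card, Fintype.card_fin, Fintype.card_coe]
    omega
  obtain ⟨e, he, hdiag, hfe⟩ := f.exists_map_eq_reachableSetoid_fromEdgeSet hcard
  have hB : B = boolOf (fromEdgeSet (Set.range e)) := by
    have hBf : B = Set.range f := by
      simp [f, Set.range_comp, φ.symm.surjective.range_eq]
    rw [hBf, funext hfe]
    exact range_reachableSetoid_fromEdgeSet_image e
  have hnc : ∀ H ≤ fromEdgeSet (Set.range e), NoncrossingS P (partOf H) :=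
    fun H hH => hBnc _ (hB ▸ ⟨H, hH, rfl⟩)
  have htop := f.map_univ hcard
  rw [hfe, coe_univ, Set.image_univ] at htop
  exact ⟨_, ⟨isTree_fromEdgeSet_range he hdiag htop hcard, edgesNoncrossing_of_noncrossing hnc,
    convexGeodesics_of_noncrossing hnc⟩, hB⟩

/-- Let `B` be a subposet of `NC(P)` isomorphic to `Bool(n-1)`, where `P` is an `n`-point
hull configuration.  Then there is a noncrossing spanning tree `τ` on `P` with convex
geodesics (formed by the edges corresponding to the `n-1` atoms of `B`) such that
`B = Bool(τ)`. -/
theorem stmt17 (P : Finset ℂ) (hP : IsHullConfig P) (hn : 1 ≤ P.card)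
    (B : Set (Setoid (Vtx P)))
    (hBnc : ∀ s ∈ B, NoncrossingS P s)
    (hBiso : Nonempty (↥B ≃o Finset (Fin (P.card - 1)))) :
    ∃ G : SimpleGraph (Vtx P), IsNCTree P G ∧ B = boolOf G :=
  stmt17_general P hn B hBnc hBiso
end
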